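/- Let U be a regular subgroup of G not contained in S_h × S_n × {id}, let (p^j)_{j ∈ P^U} be a system of representatives of the U-orbits of P, let (φ_*, ψ_*, ρ_0) ∈ U, and let C be a U-consistent social choice correspondence. For j ∈ P_1^U let A^1_C(p^j) = {(y,z) ∈ C(p^j) × C(p^{j (φ_*,ψ_*,ρ_0)}) : z ≠ ψ_*(y)}, and for j ∈ P_2^U let ψ_j be the unique permutation in S_n such that Stab_U(p^j) ⊆ (S_h × {id} × {id}) ∪ (S_h × {ψ_j} × {ρ_0}) and A^2_C(p^j) = {x ∈ C(p^j) : ψ_j(x) ≠ x}. Then the number of resolute U-consistent refinements of C equals the product over j ∈ P_1^U of |A^1_C(p^j)| times the product over j ∈ P_2^U of |A^2_C(p^j)| (with empty products equal to 1), and this number is positive; in particular, C admits at least one resolute U-consistent refinement. -/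

import Mathlib

/-!
Common framework: preferences on `n ≥ 2` alternatives (`Fin n`) expressed by `h ≥ 2`
individuals (`Fin h`).  Following the paper, a linear order `q ∈ L(N)` is identified with
the permutation of `Fin n` sending each rank position (`0` = best) to the alternative
occupying that position.
-/

/-- A preference relation (a linear order on the set `Fin n` of alternatives), identified
with the permutation sending each rank position (`0` = best) to the alternative at
that position. -/
abbrev Pref (n : ℕ) := Equiv.Perm (Fin n)

/-- `x ⪰_q y` : alternative `x` is weakly preferred to `y` in `q`. -/
def prefGE {n : ℕ} (q : Pref n) (x y : Fin n) : Prop := q.symm x ≤ q.symm y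

/-- `x ≻_q y` : alternative `x` is strictly preferred to `y` in `q`. -/
def prefGT {n : ℕ} (q : Pref n) (x y : Fin n) : Prop := q.symm x < q.symm y

instance {n : ℕ} (q : Pref n) (x y : Fin n) : Decidable (prefGT q x y) :=
  inferInstanceAs (Decidable (q.symm x < q.symm y))

/-- A preference profile: one preference relation for each individual. -/
abbrev Profile (n h : ℕ) := Fin h → Pref n

/-- A social choice correspondence (the nonemptiness of its values is `IsSCC`). -/
abbrev SCC (n h : ℕ) := Profile n h → Set (Fin n)

/-- `C` has nonempty values, i.e. `C` really is a social choice correspondence. -/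
def IsSCC {n h : ℕ} (C : SCC n h) : Prop := ∀ p, (C p).Nonempty

/-- `C` is resolute: it always selects exactly one alternative. -/
def Resolute {n h : ℕ} (C : SCC n h) : Prop := ∀ p, ∃ x, C p = {x}

/-- `C'` is a refinement of `C`. -/
def Refines {n h : ℕ} (C' C : SCC n h) : Prop := ∀ p, C' p ⊆ C p

/-- The order-reversing permutation `ρ₀ : r ↦ n - r + 1`. -/
def rho0 (n : ℕ) : Equiv.Perm (Fin n) := Fin.revPerm

/-- The profile `p^{(id,id,ρ₀)}` obtained from `p` by reversing every individual
preference. -/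
def revProfile {n h : ℕ} (p : Profile n h) : Profile n h := fun i => p i * rho0 n

/-- `C` is immune to the reversal bias. -/
def Immune {n h : ℕ} (C : SCC n h) : Prop :=
  ∀ (p : Profile n h) (x : Fin n), C p = {x} → C (revProfile p) ≠ C p

/-- `Y` is a partition: nonempty, pairwise disjoint, covering blocks. -/
def IsPartition {α : Type*} {s : ℕ} (Y : Fin s → Finset α) : Prop :=
  (∀ j, (Y j).Nonempty) ∧ (∀ j k, j ≠ k → Disjoint (Y j) (Y k)) ∧ (∀ a, ∃ j, a ∈ Y j)

/-- The ambient group `S_h × S_n × S_n` (the third component is meant to range in `Ω`). -/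
abbrev Amb (n h : ℕ) := Equiv.Perm (Fin h) × Equiv.Perm (Fin n) × Equiv.Perm (Fin n)

/-- The action `p ↦ p^g` of `g = (φ,ψ,ρ)` on profiles. -/
def gact {n h : ℕ} (g : Amb n h) (p : Profile n h) : Profile n h :=
  fun i => g.2.1 * p (g.1⁻¹ i) * g.2.2

/-- The group `Ω = {id, ρ₀}`. -/
def OmegaGrp (n : ℕ) : Subgroup (Equiv.Perm (Fin n)) := Subgroup.zpowers (rho0 n)

/-- The group `G = S_h × S_n × Ω`. -/
def bigG (n h : ℕ) : Subgroup (Amb n h) :=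
  (⊤ : Subgroup (Equiv.Perm (Fin h))).prod
    ((⊤ : Subgroup (Equiv.Perm (Fin n))).prod (OmegaGrp n))

/-- `U`-consistency of a social choice correspondence `C`: for every `p` and every
`(φ,ψ,ρ) ∈ U`, if `ρ = id` then `C(p^{(φ,ψ,id)}) = ψ C(p)`, and if `ρ = ρ₀` and
`|C(p)| = 1` then `C(p^{(φ,ψ,ρ₀)}) ≠ ψ C(p)`. -/
def UConsistent {n h : ℕ} (U : Subgroup (Amb n h)) (C : SCC n h) : Prop :=
  ∀ (p : Profile n h), ∀ g ∈ U,
    (g.2.2 = 1 → C (gact g p) = g.2.1 '' C p) ∧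
    (g.2.2 = rho0 n → ∀ x : Fin n, C p = {x} → C (gact g p) ≠ g.2.1 '' C p)

/-- A subgroup `U` of `G` is regular: for every profile `p` there is `ψ⋆ ∈ S_n`
conjugate to `ρ₀` with `Stab_U(p) ⊆ (S_h × {id} × {id}) ∪ (S_h × {ψ⋆} × {ρ₀})`. -/
def RegularSubgroup {n h : ℕ} (U : Subgroup (Amb n h)) : Prop :=
  ∀ p : Profile n h, ∃ ψs : Equiv.Perm (Fin n), IsConj (rho0 n) ψs ∧
    ∀ g ∈ U, gact g p = p →
      (g.2.1 = 1 ∧ g.2.2 = 1) ∨ (g.2.1 = ψs ∧ g.2.2 = rho0 n)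

/-- `p` and `q` lie in the same `U`-orbit. -/
def SameOrbit {n h : ℕ} (U : Subgroup (Amb n h)) (p q : Profile n h) : Prop :=
  ∃ g ∈ U, gact g p = q

/-- `S` is a system of representatives of the `U`-orbits: every profile is in the
orbit of exactly one element of `S`. -/
def IsRepSystem {n h : ℕ} (U : Subgroup (Amb n h)) (S : Set (Profile n h)) : Prop :=
  ∀ p : Profile n h, ∃! r, r ∈ S ∧ SameOrbit U r p

/-- The stabilizer of `r` in `U` is contained in `S_h × S_n × {id}` (i.e. the
`U`-orbit of `r` belongs to `P₁ᵁ`). -/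
def StabIn1 {n h : ℕ} (U : Subgroup (Amb n h)) (r : Profile n h) : Prop :=
  ∀ g ∈ U, gact g r = r → g.2.2 = 1


/-!
On the `U`-orbit of a representative `r`, a resolute `U`-consistent refinement is determined
by its values `y` at `r` and `z` at `gs • r`: the elements of `U` with `ρ = id` force the value
`ψ y` at `(φ,ψ,id) • r` and `ψ ψ*⁻¹ z` at `(φ,ψ,ρ₀) • r`, and the elements with `ρ = ρ₀` then
only require `z ≠ ψ* y`. Conversely such a pair extends to the orbit exactly when this formula
is compatible with the stabilizer of `r`. For `r ∈ P₁ᵁ` regularity makes the stabilizer act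
trivially on alternatives, so every pair of `A¹_C(r)` extends; for `r ∈ P₂ᵁ` the stabilizer
element `(φ, ψ_j, ρ₀)` forces `z = ψ* ψ_j y`, leaving the free choice of `y ∈ A²_C(r)`. Both sets
are nonempty because `C` is itself `U`-consistent and `ψ_j`, a conjugate of `ρ₀`, fixes at most
one alternative.
-/

section Action

variable {n h : ℕ} {U : Subgroup (Amb n h)} {g g' : Amb n h}

lemma rho0_mul_self (n : ℕ) : rho0 n * rho0 n = 1 := by
  ext i
  simp [rho0]

lemma rho0_ne_one (hn : 2 ≤ n) : rho0 n ≠ 1 := by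
  intro h1
  have := congrArg (fun e : Equiv.Perm (Fin n) => (e ⟨0, by omega⟩ : ℕ)) h1
  simp [rho0] at this
  omega

lemma eq_of_rho0_apply_eq_self {i j : Fin n} (hi : rho0 n i = i) (hj : rho0 n j = j) :
    i = j := by
  simp only [rho0, Fin.revPerm_apply, Fin.ext_iff, Fin.val_rev] at hi hj ⊢
  omega

lemma eq_of_isConj_rho0 {ψ : Equiv.Perm (Fin n)} (hψ : IsConj (rho0 n) ψ) {x y : Fin n}
    (hx : ψ x = x) (hy : ψ y = y) : x = y := by
  obtain ⟨c, rfl⟩ := isConj_iff.mp hψ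
  have fixed : ∀ {a}, (c * rho0 n * c⁻¹) a = a → rho0 n (c⁻¹ a) = c⁻¹ a := fun ha =>
    Equiv.Perm.eq_inv_iff_eq.mpr ha
  exact c⁻¹.injective (eq_of_rho0_apply_eq_self (fixed hx) (fixed hy))

lemma eq_one_or_eq_rho0_of_mem_omegaGrp {x : Equiv.Perm (Fin n)} (hx : x ∈ OmegaGrp n) :
    x = 1 ∨ x = rho0 n := by
  obtain ⟨k, rfl⟩ := Subgroup.mem_zpowers_iff.mp hx
  have hsq : rho0 n ^ (2 : ℤ) = 1 := by rw [zpow_two, rho0_mul_self]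
  obtain ⟨m, rfl | rfl⟩ := Int.even_or_odd' k
  · left
    rw [zpow_mul, hsq, one_zpow]
  · right
    rw [zpow_add, zpow_mul, hsq, one_zpow, one_mul, zpow_one]

lemma rho_eq_one_or_eq_rho0 (hUG : U ≤ bigG n h) (hg : g ∈ U) :
    g.2.2 = 1 ∨ g.2.2 = rho0 n :=
  eq_one_or_eq_rho0_of_mem_omegaGrp (Subgroup.mem_prod.mp (Subgroup.mem_prod.mp (hUG hg)).2).2

lemma gact_one (p : Profile n h) : gact 1 p = p := by
  funext i
  simp [gact]

lemma gact_mul (hUG : U ≤ bigG n h) (hg : g ∈ U) (hg' : g' ∈ U) (p : Profile n h) :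
    gact (g * g') p = gact g (gact g' p) := by
  have hcomm : g.2.2 * g'.2.2 = g'.2.2 * g.2.2 := by
    rcases rho_eq_one_or_eq_rho0 hUG hg with h1 | h1 <;>
      rcases rho_eq_one_or_eq_rho0 hUG hg' with h2 | h2 <;> simp [h1, h2]
  funext i
  simp only [gact, Prod.fst_mul, Prod.snd_mul, mul_inv_rev, Equiv.Perm.mul_apply]
  rw [hcomm]
  group

lemma gact_eq_gact_mul_inv (hUG : U ≤ bigG n h) (hg : g ∈ U) (hg' : g' ∈ U)
    (p : Profile n h) : gact g p = gact (g * g'⁻¹) (gact g' p) := by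
  rw [← gact_mul hUG (mul_mem hg (inv_mem hg')) hg', inv_mul_cancel_right]

lemma gact_inv_mul_eq_self (hUG : U ≤ bigG n h) (hg : g ∈ U) (hg' : g' ∈ U)
    {r : Profile n h} (h : gact g r = gact g' r) : gact (g'⁻¹ * g) r = r := by
  rw [gact_mul hUG (inv_mem hg') hg, h, ← gact_mul hUG (inv_mem hg') hg', inv_mul_cancel,
    gact_one]

lemma UConsistent.image_eq {C : SCC n h} (hcons : UConsistent U C) (hUG : U ≤ bigG n h)
    (hg : g ∈ U) (hg' : g' ∈ U) (hρ : g.2.2 = g'.2.2) (p : Profile n h) :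
    C (gact g p) = (g.2.1 * g'.2.1⁻¹) '' C (gact g' p) := by
  rw [gact_eq_gact_mul_inv hUG hg hg']
  exact (hcons _ _ (mul_mem hg (inv_mem hg'))).1 (by simp [hρ])

end Action

section Selections

variable {n h : ℕ} {U : Subgroup (Amb n h)} {C : SCC n h} {gs g g' : Amb n h}
  {yz : Fin n × Fin n}

def IsConsistentSelection (U : Subgroup (Amb n h)) (sel : Profile n h → Fin n) : Prop :=
  ∀ p, ∀ g ∈ U, (g.2.2 = 1 → sel (gact g p) = g.2.1 (sel p)) ∧
    (g.2.2 = rho0 n → sel (gact g p) ≠ g.2.1 (sel p))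

lemma uConsistent_singleton_iff {sel : Profile n h → Fin n} :
    UConsistent U (fun p => {sel p}) ↔ IsConsistentSelection U sel := by
  simp [UConsistent, IsConsistentSelection]

noncomputable def resoluteRefinementEquiv (U : Subgroup (Amb n h)) (C : SCC n h) :
    {f : SCC n h // Resolute f ∧ Refines f C ∧ UConsistent U f} ≃
      {sel : Profile n h → Fin n // (∀ p, sel p ∈ C p) ∧ IsConsistentSelection U sel} where
  toFun f :=
    have hf : f.1 = fun p => {(f.2.1 p).choose} := funext fun p => (f.2.1 p).choose_spec
    ⟨fun p => (f.2.1 p).choose, fun p => f.2.2.1 p ((f.2.1 p).choose_spec ▸ rfl),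
      uConsistent_singleton_iff.mp (hf ▸ f.2.2.2)⟩
  invFun sel := ⟨fun p => {sel.1 p}, fun _ => ⟨_, rfl⟩,
    fun p => Set.singleton_subset_iff.mpr (sel.2.1 p), uConsistent_singleton_iff.mpr sel.2.2⟩
  left_inv f := Subtype.ext (funext fun p => (f.2.1 p).choose_spec.symm)
  right_inv sel := Subtype.ext (funext fun p =>
    (Set.singleton_injective (⟨_, rfl⟩ : ∃ x, {sel.1 p} = ({x} : Set (Fin n))).choose_spec).symm)

/-- The value at `gact g r` of the consistent selection with values `yz.1` at `r` and `yz.2`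
at `gact gs r`. -/
def orbitValue (gs : Amb n h) (yz : Fin n × Fin n) (g : Amb n h) : Fin n :=
  g.2.1 (if g.2.2 = 1 then yz.1 else gs.2.1⁻¹ yz.2)

lemma orbitValue_one : orbitValue gs yz 1 = yz.1 := by
  simp [orbitValue]

lemma orbitValue_self (hn : 2 ≤ n) (hgs3 : gs.2.2 = rho0 n) : orbitValue gs yz gs = yz.2 := by
  simp [orbitValue, hgs3, rho0_ne_one hn]

lemma orbitValue_mul_of_rho_eq_one (hg : g.2.2 = 1) (g' : Amb n h) :
    orbitValue gs yz (g * g') = g.2.1 (orbitValue gs yz g') := by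
  simp [orbitValue, hg]

lemma orbitValue_mul_ne_of_rho_eq_rho0 (hn : 2 ≤ n) (hg : g.2.2 = rho0 n)
    (hg' : g'.2.2 = 1 ∨ g'.2.2 = rho0 n) (hyz : yz.2 ≠ gs.2.1 yz.1) :
    orbitValue gs yz (g * g') ≠ g.2.1 (orbitValue gs yz g') := by
  rcases hg' with hg' | hg' <;>
    simp [orbitValue, hg, hg', rho0_mul_self, rho0_ne_one hn, Equiv.symm_apply_eq,
      Equiv.eq_symm_apply, hyz, Ne.symm hyz]

lemma IsConsistentSelection.gact_eq_orbitValue {sel : Profile n h → Fin n}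
    (hsel : IsConsistentSelection U sel) (hn : 2 ≤ n) (hUG : U ≤ bigG n h) (hgs : gs ∈ U)
    (hgs3 : gs.2.2 = rho0 n) (hg : g ∈ U) (r : Profile n h) :
    sel (gact g r) = orbitValue gs (sel r, sel (gact gs r)) g := by
  rcases rho_eq_one_or_eq_rho0 hUG hg with hρ | hρ
  · simp [orbitValue, hρ, (hsel r g hg).1 hρ]
  · rw [gact_eq_gact_mul_inv hUG hg hgs,
      (hsel _ _ (mul_mem hg (inv_mem hgs))).1 (by simp [hρ, hgs3])]
    simp [orbitValue, hρ, rho0_ne_one hn]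

/-- The set `A¹_C(r)` of the statement. -/
def choiceSet₁ (C : SCC n h) (gs : Amb n h) (r : Profile n h) : Set (Fin n × Fin n) :=
  {yz | yz.1 ∈ C r ∧ yz.2 ∈ C (gact gs r) ∧ yz.2 ≠ gs.2.1 yz.1}

/-- The set `A²_C(r)` of the statement, for `ψ = ψ_j`. -/
def choiceSet₂ (C : SCC n h) (ψ : Equiv.Perm (Fin n)) (r : Profile n h) : Set (Fin n) :=
  {a | a ∈ C r ∧ ψ a ≠ a}

lemma UConsistent.orbitValue_mem (hcons : UConsistent U C) (hn : 2 ≤ n) (hUG : U ≤ bigG n h)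
    (hgs : gs ∈ U) (hgs3 : gs.2.2 = rho0 n) {r : Profile n h} (hyz : yz ∈ choiceSet₁ C gs r)
    (hg : g ∈ U) : orbitValue gs yz g ∈ C (gact g r) := by
  rcases rho_eq_one_or_eq_rho0 hUG hg with hρ | hρ
  · rw [(hcons r g hg).1 hρ]
    exact ⟨_, hyz.1, by simp [orbitValue, hρ]⟩
  · rw [hcons.image_eq hUG hg hgs (hρ.trans hgs3.symm)]
    exact ⟨_, hyz.2.1, by simp [orbitValue, hρ, rho0_ne_one hn]⟩

def AdmissiblePair (U : Subgroup (Amb n h)) (C : SCC n h) (gs : Amb n h) (r : Profile n h)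
    (yz : Fin n × Fin n) : Prop :=
  yz ∈ choiceSet₁ C gs r ∧
    ∀ g ∈ U, ∀ g' ∈ U, gact g r = gact g' r → orbitValue gs yz g = orbitValue gs yz g'

lemma IsConsistentSelection.admissiblePair {sel : Profile n h → Fin n}
    (hsel : IsConsistentSelection U sel) (hmem : ∀ p, sel p ∈ C p) (hn : 2 ≤ n)
    (hUG : U ≤ bigG n h) (hgs : gs ∈ U) (hgs3 : gs.2.2 = rho0 n) (r : Profile n h) :
    AdmissiblePair U C gs r (sel r, sel (gact gs r)) :=
  ⟨⟨hmem r, hmem _, (hsel r gs hgs).2 hgs3⟩, fun g hg g' hg' hgg' => by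
    rw [← hsel.gact_eq_orbitValue hn hUG hgs hgs3 hg,
      ← hsel.gact_eq_orbitValue hn hUG hgs hgs3 hg', hgg']⟩

lemma orbitValue_eq_of_forall_stabilizer (hUG : U ≤ bigG n h) {r : Profile n h}
    (hstab : ∀ s ∈ U, gact s r = r → ∀ g' ∈ U, orbitValue gs yz (g' * s) = orbitValue gs yz g')
    (hg : g ∈ U) (hg' : g' ∈ U) (hgg' : gact g r = gact g' r) :
    orbitValue gs yz g = orbitValue gs yz g' := by
  have := hstab _ (mul_mem (inv_mem hg') hg) (gact_inv_mul_eq_self hUG hg hg' hgg') g' hg'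
  rwa [mul_inv_cancel_left] at this

end Selections

section Extension

variable {n h : ℕ} {U : Subgroup (Amb n h)} {S : Finset (Profile n h)} (hS : IsRepSystem U ↑S)
  {C : SCC n h} {gs g : Amb n h}

noncomputable def orbitRep (p : Profile n h) : S :=
  ⟨(hS p).exists.choose, (hS p).exists.choose_spec.1⟩

noncomputable def repTransport (p : Profile n h) : Amb n h :=
  (hS p).exists.choose_spec.2.choose

lemma repTransport_mem (p : Profile n h) : repTransport hS p ∈ U :=
  (hS p).exists.choose_spec.2.choose_spec.1

lemma gact_repTransport (p : Profile n h) : gact (repTransport hS p) (orbitRep hS p) = p :=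
  (hS p).exists.choose_spec.2.choose_spec.2

lemma orbitRep_gact {r : Profile n h} (hr : r ∈ S) (hg : g ∈ U) :
    orbitRep hS (gact g r) = ⟨r, hr⟩ :=
  Subtype.ext <| (hS _).unique
    ⟨(orbitRep hS _).2, _, repTransport_mem hS _, gact_repTransport hS _⟩ ⟨hr, g, hg, rfl⟩

noncomputable def extendSelection (gs : Amb n h) (d : S → Fin n × Fin n) (p : Profile n h) :
    Fin n :=
  orbitValue gs (d (orbitRep hS p)) (repTransport hS p)

variable {d : S → Fin n × Fin n}

lemma extendSelection_gact (hd : ∀ r : S, AdmissiblePair U C gs r (d r)) {r : Profile n h}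
    (hr : r ∈ S) (hg : g ∈ U) :
    extendSelection hS gs d (gact g r) = orbitValue gs (d ⟨r, hr⟩) g := by
  have htransport := gact_repTransport hS (gact g r)
  rw [orbitRep_gact hS hr hg] at htransport
  rw [extendSelection, orbitRep_gact hS hr hg]
  exact (hd ⟨r, hr⟩).2 _ (repTransport_mem hS _) g hg htransport

lemma extendSelection_mem (hcons : UConsistent U C) (hn : 2 ≤ n) (hUG : U ≤ bigG n h)
    (hgs : gs ∈ U) (hgs3 : gs.2.2 = rho0 n) (hd : ∀ r : S, AdmissiblePair U C gs r (d r))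
    (p : Profile n h) : extendSelection hS gs d p ∈ C p := by
  obtain ⟨r, hr, g, hg, rfl⟩ := (hS p).exists
  rw [extendSelection_gact hS hd hr hg]
  exact hcons.orbitValue_mem hn hUG hgs hgs3 (hd ⟨r, hr⟩).1 hg

lemma isConsistentSelection_extendSelection (hn : 2 ≤ n) (hUG : U ≤ bigG n h)
    (hd : ∀ r : S, AdmissiblePair U C gs r (d r)) :
    IsConsistentSelection U (extendSelection hS gs d) := by
  intro p g hg
  obtain ⟨r, hr, g₀, hg₀, rfl⟩ := (hS p).exists
  rw [← gact_mul hUG hg hg₀, extendSelection_gact hS hd hr (mul_mem hg hg₀),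
    extendSelection_gact hS hd hr hg₀]
  exact ⟨fun hρ => orbitValue_mul_of_rho_eq_one hρ g₀, fun hρ =>
    orbitValue_mul_ne_of_rho_eq_rho0 hn hρ (rho_eq_one_or_eq_rho0 hUG hg₀) (hd _).1.2.2⟩

noncomputable def consistentSelectionEquiv (hn : 2 ≤ n) (hUG : U ≤ bigG n h) (hgs : gs ∈ U)
    (hgs3 : gs.2.2 = rho0 n) (hcons : UConsistent U C) :
    {sel : Profile n h → Fin n // (∀ p, sel p ∈ C p) ∧ IsConsistentSelection U sel} ≃
      ∀ r : S, {yz // AdmissiblePair U C gs r yz} where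
  toFun sel r := ⟨(sel.1 r, sel.1 (gact gs r)),
    sel.2.2.admissiblePair sel.2.1 hn hUG hgs hgs3 r⟩
  invFun d := ⟨extendSelection hS gs fun r => (d r).1,
    extendSelection_mem hS hcons hn hUG hgs hgs3 fun r => (d r).2,
    isConsistentSelection_extendSelection hS hn hUG fun r => (d r).2⟩
  left_inv sel := by
    refine Subtype.ext (funext fun p => ?_)
    obtain ⟨r, hr, g, hg, rfl⟩ := (hS p).exists
    exact (extendSelection_gact hS
      (fun r : S => sel.2.2.admissiblePair sel.2.1 hn hUG hgs hgs3 r) hr hg).trans (sel.2.2.gact_eq_orbitValue hn hUG hgs hgs3 hg r).symm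
  right_inv d := by
    funext r
    have hd : ∀ r : S, AdmissiblePair U C gs r (d r).1 := fun r => (d r).2
    have hat_r := extendSelection_gact hS hd r.2 (one_mem U)
    have hat_gs := extendSelection_gact hS hd r.2 hgs
    rw [gact_one, orbitValue_one] at hat_r
    rw [orbitValue_self hn hgs3] at hat_gs
    exact Subtype.ext (Prod.ext hat_r hat_gs)

end Extension

section OrbitTypes

variable {n h : ℕ} {U : Subgroup (Amb n h)} {C : SCC n h} {gs : Amb n h} {r : Profile n h}
  {ψ : Equiv.Perm (Fin n)}

lemma setOf_admissiblePair_of_stabIn1 (hn : 2 ≤ n) (hUG : U ≤ bigG n h)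
    (hreg : RegularSubgroup U) (hst : StabIn1 U r) :
    {yz | AdmissiblePair U C gs r yz} = choiceSet₁ C gs r := by
  ext yz
  refine ⟨And.left, fun hyz => ⟨hyz, fun g hg g' hg' hgg' => ?_⟩⟩
  refine orbitValue_eq_of_forall_stabilizer hUG (fun s hs hsr g' _ => ?_) hg hg' hgg'
  obtain ⟨ψs, -, hstab⟩ := hreg r
  have hsρ : s.2.2 = 1 := hst s hs hsr
  have hsψ : s.2.1 = 1 :=
    ((hstab s hs hsr).resolve_right fun h => rho0_ne_one hn (h.2.symm.trans hsρ)).1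
  simp [orbitValue, hsψ, hsρ]

lemma exists_mem_stabilizer_of_not_stabIn1 (hnst : ¬ StabIn1 U r)
    (hψ : ∀ g ∈ U, gact g r = r → (g.2.1 = 1 ∧ g.2.2 = 1) ∨ (g.2.1 = ψ ∧ g.2.2 = rho0 n)) :
    ∃ t ∈ U, gact t r = r ∧ t.2.1 = ψ ∧ t.2.2 = rho0 n := by
  simp only [StabIn1, not_forall] at hnst
  obtain ⟨t, ht, htr, htρ⟩ := hnst
  exact ⟨t, ht, htr, (hψ t ht htr).resolve_left fun h => htρ h.2⟩

lemma involutive_of_not_stabIn1 (hn : 2 ≤ n) (hUG : U ≤ bigG n h) (hnst : ¬ StabIn1 U r)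
    (hψ : ∀ g ∈ U, gact g r = r → (g.2.1 = 1 ∧ g.2.2 = 1) ∨ (g.2.1 = ψ ∧ g.2.2 = rho0 n)) :
    Function.Involutive ψ := by
  obtain ⟨t, ht, htr, htψ, htρ⟩ := exists_mem_stabilizer_of_not_stabIn1 hnst hψ
  have htt : gact (t * t) r = r := by rw [gact_mul hUG ht ht, htr, htr]
  have hsq : ψ * ψ = 1 := by
    have := (hψ _ (mul_mem ht ht) htt).resolve_right fun h =>
      rho0_ne_one hn (by simpa [htρ, rho0_mul_self] using h.2.symm)
    simpa [htψ] using this.1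
  exact fun a => by simpa using congrArg (· a) hsq

lemma setOf_admissiblePair_of_not_stabIn1 (hn : 2 ≤ n) (hUG : U ≤ bigG n h)
    (hcons : UConsistent U C) (hgs : gs ∈ U) (hgs3 : gs.2.2 = rho0 n) (hnst : ¬ StabIn1 U r)
    (hψ : ∀ g ∈ U, gact g r = r → (g.2.1 = 1 ∧ g.2.2 = 1) ∨ (g.2.1 = ψ ∧ g.2.2 = rho0 n)) :
    {yz | AdmissiblePair U C gs r yz} = (fun a => (a, gs.2.1 (ψ a))) '' choiceSet₂ C ψ r := by
  obtain ⟨t, ht, htr, htψ, htρ⟩ := exists_mem_stabilizer_of_not_stabIn1 hnst hψ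
  have hinv := involutive_of_not_stabIn1 hn hUG hnst hψ
  ext ⟨y, z⟩
  constructor
  · rintro ⟨⟨hy, -, hne⟩, hwd⟩
    have hty := hwd t ht 1 (one_mem U) (by rw [htr, gact_one])
    simp only [orbitValue, htψ, htρ, rho0_ne_one hn, if_false, Prod.snd_one, if_true,
      Prod.fst_one, Equiv.Perm.one_apply] at hty
    have hz : z = gs.2.1 (ψ y) := Equiv.Perm.inv_eq_iff_eq.mp (by rw [← hty, hinv])
    subst hz
    exact ⟨y, ⟨hy, fun hfix => hne (by rw [hfix])⟩, rfl⟩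
  · rintro ⟨a, ⟨ha, hfix⟩, hya⟩
    obtain ⟨rfl, rfl⟩ := Prod.ext_iff.mp hya
    refine ⟨⟨ha, ?_, fun h => hfix (gs.2.1.injective h)⟩, fun g hg g' hg' hgg' =>
      orbitValue_eq_of_forall_stabilizer hUG (fun s hs hsr g' hg' => ?_) hg hg' hgg'⟩
    · rw [hcons.image_eq hUG hgs ht (hgs3.trans htρ.symm), htr]
      exact ⟨a, ha, by simp [htψ, Equiv.symm_apply_eq, hinv a]⟩
    · rcases hψ s hs hsr with ⟨hs1, hs2⟩ | ⟨hs1, hs2⟩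
      · simp [orbitValue, hs1, hs2]
      · rcases rho_eq_one_or_eq_rho0 hUG hg' with h' | h' <;>
          simp [orbitValue, hs1, hs2, h', rho0_mul_self, rho0_ne_one hn, hinv _]

open scoped Classical in
lemma ncard_setOf_admissiblePair (hn : 2 ≤ n) (hUG : U ≤ bigG n h) (hreg : RegularSubgroup U)
    (hcons : UConsistent U C) (hgs : gs ∈ U) (hgs3 : gs.2.2 = rho0 n)
    (hψ : ¬ StabIn1 U r → ∀ g ∈ U, gact g r = r →
      (g.2.1 = 1 ∧ g.2.2 = 1) ∨ (g.2.1 = ψ ∧ g.2.2 = rho0 n)) :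
    {yz | AdmissiblePair U C gs r yz}.ncard =
      if StabIn1 U r then (choiceSet₁ C gs r).ncard else (choiceSet₂ C ψ r).ncard := by
  split_ifs with hst
  · rw [setOf_admissiblePair_of_stabIn1 hn hUG hreg hst]
  · rw [setOf_admissiblePair_of_not_stabIn1 hn hUG hcons hgs hgs3 hst (hψ hst),
      Set.ncard_image_of_injective _ fun a b hab => congrArg Prod.fst hab]

lemma choiceSet₁_nonempty (hC : IsSCC C) (hcons : UConsistent U C) (hgs : gs ∈ U)
    (hgs3 : gs.2.2 = rho0 n) (r : Profile n h) : (choiceSet₁ C gs r).Nonempty := by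
  obtain ⟨y, hy⟩ := hC r
  obtain ⟨z, hz⟩ := hC (gact gs r)
  by_cases hzy : z = gs.2.1 y
  swap
  · exact ⟨(y, z), hy, hz, hzy⟩
  subst hzy
  by_cases hsing : C r = {y}
  · have hne := (hcons r gs hgs).2 hgs3 y hsing
    rw [hsing, Set.image_singleton] at hne
    obtain ⟨z', hz', hz'ne⟩ := ((Set.nontrivial_iff_ne_singleton hz).mpr hne).exists_ne (gs.2.1 y)
    exact ⟨(y, z'), hy, hz', hz'ne⟩
  · obtain ⟨y', hy', hy'ne⟩ := ((Set.nontrivial_iff_ne_singleton hy).mpr hsing).exists_ne y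
    exact ⟨(y', gs.2.1 y), hy', hz, fun h => hy'ne (gs.2.1.injective h).symm⟩

lemma choiceSet₂_nonempty (hn : 2 ≤ n) (hC : IsSCC C) (hcons : UConsistent U C)
    (hreg : RegularSubgroup U) (hnst : ¬ StabIn1 U r)
    (hψ : ∀ g ∈ U, gact g r = r → (g.2.1 = 1 ∧ g.2.2 = 1) ∨ (g.2.1 = ψ ∧ g.2.2 = rho0 n)) :
    (choiceSet₂ C ψ r).Nonempty := by
  obtain ⟨t, ht, htr, htψ, htρ⟩ := exists_mem_stabilizer_of_not_stabIn1 hnst hψ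
  have hconj : IsConj (rho0 n) ψ := by
    obtain ⟨ψs, hψs, hstab⟩ := hreg r
    rcases hstab t ht htr with h | h
    · exact absurd (htρ.symm.trans h.2) (rho0_ne_one hn)
    · exact htψ ▸ h.1 ▸ hψs
  obtain ⟨y, hy⟩ := hC r
  by_cases hfix : ψ y = y
  swap
  · exact ⟨y, hy, hfix⟩
  by_cases hsing : C r = {y}
  · have hne := (hcons r t ht).2 htρ y hsing
    rw [htr, hsing, Set.image_singleton, htψ, hfix] at hne
    exact absurd rfl hne
  · obtain ⟨y', hy', hy'ne⟩ := ((Set.nontrivial_iff_ne_singleton hy).mpr hsing).exists_ne y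
    exact ⟨y', hy', fun hfix' => hy'ne (eq_of_isConj_rho0 hconj hfix' hfix)⟩

end OrbitTypes

open scoped Classical in
theorem statement13_general {n h : ℕ} (hn : 2 ≤ n)
    (U : Subgroup (Amb n h)) (hUG : U ≤ bigG n h) (hreg : RegularSubgroup U)
    (S : Finset (Profile n h)) (hS : IsRepSystem U ↑S)
    (gs : Amb n h) (hgs : gs ∈ U) (hgs3 : gs.2.2 = rho0 n)
    (C : SCC n h) (hC : IsSCC C) (hcons : UConsistent U C)
    (ψj : Profile n h → Equiv.Perm (Fin n))
    (hψj : ∀ r ∈ S, ¬ StabIn1 U r → ∀ g ∈ U, gact g r = r →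
      (g.2.1 = 1 ∧ g.2.2 = 1) ∨ (g.2.1 = ψj r ∧ g.2.2 = rho0 n)) :
    Nat.card {f : SCC n h // Resolute f ∧ Refines f C ∧ UConsistent U f} =
        (∏ r ∈ S.filter fun r => StabIn1 U r,
          {yz : Fin n × Fin n |
            yz.1 ∈ C r ∧ yz.2 ∈ C (gact gs r) ∧ yz.2 ≠ gs.2.1 yz.1}.ncard) *
        (∏ r ∈ S.filter fun r => ¬ StabIn1 U r,
          {a : Fin n | a ∈ C r ∧ ψj r a ≠ a}.ncard) ∧
      0 < Nat.card {f : SCC n h // Resolute f ∧ Refines f C ∧ UConsistent U f} ∧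
      ∃ f : SCC n h, Resolute f ∧ Refines f C ∧ UConsistent U f := by
  have hcount : Nat.card {f : SCC n h // Resolute f ∧ Refines f C ∧ UConsistent U f} =
      ∏ r ∈ S, if StabIn1 U r then (choiceSet₁ C gs r).ncard
        else (choiceSet₂ C (ψj r) r).ncard := by
    rw [Nat.card_congr ((resoluteRefinementEquiv U C).trans
      (consistentSelectionEquiv hS hn hUG hgs hgs3 hcons)), Nat.card_pi,
      ← Finset.prod_coe_sort S]
    refine Finset.prod_congr rfl fun r _ => ?_
    rw [← ncard_setOf_admissiblePair hn hUG hreg hcons hgs hgs3 (hψj r r.2),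
      ← Nat.card_coe_set_eq]
    rfl
  have hpos : 0 < Nat.card {f : SCC n h // Resolute f ∧ Refines f C ∧ UConsistent U f} := by
    rw [hcount]
    refine Finset.prod_pos fun r hr => ?_
    split_ifs with hst
    · exact (choiceSet₁_nonempty hC hcons hgs hgs3 r).ncard_pos
    · exact (choiceSet₂_nonempty hn hC hcons hreg hst (hψj r hr hst)).ncard_pos
  obtain ⟨⟨f, hf⟩⟩ := (Nat.card_pos_iff.mp hpos).1
  exact ⟨by rw [hcount, Finset.prod_ite]; rfl, hpos, f, hf⟩

open scoped Classical in
/-- Theorem `fu-min-count2`: for a regular `U` not contained in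
`S_h × S_n × {id}`, a system `S` of representatives of the `U`-orbits, a fixed
`gs = (φ*,ψ*,ρ₀) ∈ U` and a `U`-consistent scc `C`, the number of resolute
`U`-consistent refinements of `C` is
`(∏_{j ∈ P₁ᵁ} |A¹_C(p^j)|) * (∏_{j ∈ P₂ᵁ} |A²_C(p^j)|)`, and this number is positive;
in particular there is at least one such refinement. -/
theorem statement13 {n h : ℕ} (hh : 2 ≤ h) (hn : 2 ≤ n)
    (U : Subgroup (Amb n h)) (hUG : U ≤ bigG n h) (hreg : RegularSubgroup U)
    (hU2 : ∃ g ∈ U, g.2.2 ≠ 1)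
    (S : Finset (Profile n h)) (hS : IsRepSystem U ↑S)
    (gs : Amb n h) (hgs : gs ∈ U) (hgs3 : gs.2.2 = rho0 n)
    (C : SCC n h) (hC : IsSCC C) (hcons : UConsistent U C)
    (ψj : Profile n h → Equiv.Perm (Fin n))
    (hψj : ∀ r ∈ S, ¬ StabIn1 U r → ∀ g ∈ U, gact g r = r →
      (g.2.1 = 1 ∧ g.2.2 = 1) ∨ (g.2.1 = ψj r ∧ g.2.2 = rho0 n)) :
    Nat.card {f : SCC n h // Resolute f ∧ Refines f C ∧ UConsistent U f} =
        (∏ r ∈ S.filter fun r => StabIn1 U r,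
          {yz : Fin n × Fin n |
            yz.1 ∈ C r ∧ yz.2 ∈ C (gact gs r) ∧ yz.2 ≠ gs.2.1 yz.1}.ncard) *
        (∏ r ∈ S.filter fun r => ¬ StabIn1 U r,
          {a : Fin n | a ∈ C r ∧ ψj r a ≠ a}.ncard) ∧
      0 < Nat.card {f : SCC n h // Resolute f ∧ Refines f C ∧ UConsistent U f} ∧
      ∃ f : SCC n h, Resolute f ∧ Refines f C ∧ UConsistent U f :=
  statement13_general hn U hUG hreg S hS gs hgs hgs3 C hC hcons ψj hψj
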